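/- Let X and W be real normed vector spaces and j : X → W a continuous linear map. Let V : [0,∞) → X be continuous, with t ↦ j(V(t)) differentiable on (0,∞); let φ : [0,∞) → ℝ be continuous, nonincreasing and differentiable on (0,∞); let V̄ ∈ X and φ̄ ∈ ℝ with φ(t) > φ̄ for all t ≥ 0. Assume: (i) there are constants θ ∈ (0,1/2], K > 0 and a radius r > 0 such that −φ'(t) ≥ K·(φ(t) − φ̄)^{1−θ}·‖(j∘V)'(t)‖_W whenever t > 0 and ‖V(t) − V̄‖_X < r; (ii) there is K₁ > 0 such that ‖V(t) − V(s)‖_X ≤ K₁·‖j(V(t)) − j(V(s))‖_W^{1/2} for all s, t ≥ 0 and ‖V(t) − V̄‖_X ≤ K₁·‖j(V(t)) − j(V̄)‖_W^{1/2} for all t ≥ 0; (iii) there is a sequence t_n → ∞ with ‖V(t_n) − V̄‖_X → 0 and φ(t_n) → φ̄. Then there exists T ≥ 0 such that ‖j(V(t)) − j(V̄)‖_W ≤ (Kθ)^{-1}·(φ(t) − φ̄)^θ for all t ≥ T; in particular j(V(t)) → j(V̄) in W as t → ∞. -/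

import Mathlib

/-!
While the trajectory stays in the `r`-ball around `V̄`, condition (i) says that
`Λ = (Kθ)⁻¹ (φ - φ̄)^θ` decreases at least as fast as `j ∘ V` moves, so `j ∘ V` travels at most
the drop of `Λ`. Start at an ω-limit time `T` with `V T` close to `V̄` and `Λ T` small: the
interpolation estimate (ii) turns the travel bound for `j ∘ V` into one for `V`, and a continuous
induction keeps `V` in the `r/2`-ball forever. Sending the end point along the ω-limit sequence
gives `‖j (V t) - j V̄‖ ≤ Λ t`, and `Λ → 0` because `φ` is monotone with `φ (tₙ) → φ̄`.
-/

open Filter Set Topology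

theorem norm_sub_le_sub_of_norm_deriv_le_neg_deriv {E : Type*} [NormedAddCommGroup E]
    [NormedSpace ℝ E] {f f' : ℝ → E} {g g' : ℝ → ℝ} {a b : ℝ} (hab : a ≤ b)
    (hf : ∀ x ∈ Icc a b, HasDerivAt f (f' x) x) (hg : ∀ x ∈ Icc a b, HasDerivAt g (g' x) x)
    (bound : ∀ x ∈ Ico a b, ‖f' x‖ ≤ -g' x) :
    ‖f b - f a‖ ≤ g a - g b := by
  refine image_norm_le_of_norm_deriv_right_le_deriv_boundary' (f := fun x => f x - f a)
    (B := fun x => g a - g x) (B' := fun x => -g' x)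
    (fun x hx => ((hf x hx).continuousAt.sub continuousAt_const).continuousWithinAt)
    (fun x hx => ((hf x (Ico_subset_Icc_self hx)).sub_const (f a)).hasDerivWithinAt)
    (by simp)
    (fun x hx => (continuousAt_const.sub (hg x hx).continuousAt).continuousWithinAt)
    (fun x hx => ((hg x (Ico_subset_Icc_self hx)).const_sub (g a)).hasDerivWithinAt)
    bound (right_mem_Icc.2 hab)

theorem norm_sub_le_of_lojasiewicz {E : Type*} [NormedAddCommGroup E] [NormedSpace ℝ E]
    {f f' : ℝ → E} {g g' : ℝ → ℝ} {a b c θ : ℝ} (hc : 0 < c) (hθ : 0 < θ) (hab : a ≤ b)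
    (hf : ∀ x ∈ Icc a b, HasDerivAt f (f' x) x) (hg : ∀ x ∈ Icc a b, HasDerivAt g (g' x) x)
    (hg_pos : ∀ x ∈ Icc a b, 0 < g x)
    (hloj : ∀ x ∈ Ico a b, c * g x ^ (1 - θ) * ‖f' x‖ ≤ -g' x) :
    ‖f b - f a‖ ≤ (c * θ)⁻¹ * (g a ^ θ - g b ^ θ) := by
  -- `((cθ)⁻¹ g^θ)' = g' / (c g^(1-θ))`, so `hloj` bounds `‖f'‖` by minus this derivative.
  rw [mul_sub]
  refine norm_sub_le_sub_of_norm_deriv_le_neg_deriv hab hf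
    (fun x hx => ((hg x hx).rpow_const (Or.inl (hg_pos x hx).ne')).const_mul (c * θ)⁻¹) ?_
  intro x hx
  have hgx := hg_pos x (Ico_subset_Icc_self hx)
  have hpow : g x ^ (θ - 1) * g x ^ (1 - θ) = 1 := by
    rw [← Real.rpow_add hgx]; simp
  have hpos : 0 < c * g x ^ (1 - θ) := by positivity
  rw [← mul_le_mul_iff_of_pos_left hpos]
  calc c * g x ^ (1 - θ) * ‖f' x‖ ≤ -g' x := hloj x hx
    _ = c * g x ^ (1 - θ) * -((c * θ)⁻¹ * (g' x * θ * g x ^ (θ - 1))) := by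
      field_simp
      linear_combination g' x * hpow

theorem le_of_continuousOn_Ici_of_bootstrap {f : ℝ → ℝ} {a ρ : ℝ} (hf : ContinuousOn f (Ici a))
    (hstep : ∀ t ≥ a, (∀ s ∈ Ico a t, f s ≤ ρ) → f t < ρ) :
    ∀ t ≥ a, f t ≤ ρ := by
  intro t ht
  refine IsClosed.Icc_subset_of_forall_mem_nhdsGT_of_Icc_subset (s := {x | f x ≤ ρ}) ?_
    (hstep a le_rfl (by simp)).le (fun u hu hsub => ?_) (right_mem_Icc.2 ht)
  · rw [inter_comm]
    exact (hf.mono Icc_subset_Ici_self).preimage_isClosed_of_isClosed isClosed_Icc isClosed_Iic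
  · have hlt : f u < ρ := hstep u hu.1 fun s hs => hsub (Ico_subset_Icc_self hs)
    have hcont : ContinuousWithinAt f (Ioi u) u :=
      (hf u hu.1).mono fun x hx => hu.1.trans (le_of_lt hx)
    filter_upwards [hcont.eventually (gt_mem_nhds hlt)] with x hx using hx.le

theorem AntitoneOn.tendsto_atTop_of_tendsto_comp {ι : Type*} {p : Filter ι} [p.NeBot]
    {φ : ℝ → ℝ} {u : ι → ℝ} {a l : ℝ} (hφ : AntitoneOn φ (Ici a)) (hl : ∀ t ≥ a, l ≤ φ t)
    (hu : Tendsto u p atTop) (hφu : Tendsto (φ ∘ u) p (𝓝 l)) :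
    Tendsto φ atTop (𝓝 l) := by
  refine tendsto_order.2 ⟨fun b hb => ?_, fun b hb => ?_⟩
  · filter_upwards [eventually_ge_atTop a] with t ht using hb.trans_le (hl t ht)
  · obtain ⟨i, hia, hib⟩ :=
      ((hu.eventually_ge_atTop a).and (hφu.eventually_lt_const hb)).exists
    filter_upwards [eventually_ge_atTop (u i)] with t ht
    exact (hφ hia (hia.trans ht) ht).trans_lt hib

theorem forall_ge_norm_sub_le_of_displacement_le {E : Type*} [SeminormedAddCommGroup E]
    {V : ℝ → E} {x : E} {T ρ δ : ℝ} (hV : ContinuousOn V (Ici T)) (hδ : ‖V T - x‖ + δ < ρ)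
    (hdisp : ∀ t ≥ T, (∀ s ∈ Ico T t, ‖V s - x‖ ≤ ρ) → ‖V t - V T‖ ≤ δ) :
    ∀ t ≥ T, ‖V t - x‖ ≤ ρ := by
  refine le_of_continuousOn_Ici_of_bootstrap (f := fun t => ‖V t - x‖)
    (hV.sub continuousOn_const).norm fun t ht hprev => ?_
  calc ‖V t - x‖ ≤ ‖V t - V T‖ + ‖V T - x‖ := norm_sub_le_norm_sub_add_norm_sub _ _ _
    _ < ρ := by linarith [hdisp t ht hprev]

theorem stmt12_general {X W : Type*} [NormedAddCommGroup X] [NormedSpace ℝ X]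
    [NormedAddCommGroup W] [NormedSpace ℝ W]
    (j : X →L[ℝ] W) (V : ℝ → X) (jV' : ℝ → W) (φ φ' : ℝ → ℝ)
    (Vbar : X) (φbar θ K K₁ r : ℝ)
    (hVcont : ContinuousOn V (Set.Ici 0))
    (hjV : ∀ t > (0:ℝ), HasDerivAt (fun s => j (V s)) (jV' t) t)
    (hφmono : AntitoneOn φ (Set.Ici 0))
    (hφ' : ∀ t > (0:ℝ), HasDerivAt φ (φ' t) t)
    (hgt : ∀ t ≥ (0:ℝ), φbar < φ t)
    (hθ : θ ∈ Set.Ioc (0:ℝ) (1/2)) (hK : 0 < K) (hK₁ : 0 < K₁) (hr : 0 < r)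
    -- (i) angle condition + gradient inequality near Vbar
    (hineq : ∀ t > (0:ℝ), ‖V t - Vbar‖ < r →
        K * (φ t - φbar) ^ (1 - θ) * ‖jV' t‖ ≤ -φ' t)
    -- (ii) interpolation estimates
    (hinterp : ∀ s ≥ (0:ℝ), ∀ t ≥ (0:ℝ),
        ‖V t - V s‖ ≤ K₁ * ‖j (V t) - j (V s)‖ ^ ((1:ℝ)/2))
    -- (iii) an ω-limit sequence
    (tseq : ℕ → ℝ)
    (htseq : Tendsto tseq atTop atTop)
    (hVseq : Tendsto (fun n => ‖V (tseq n) - Vbar‖) atTop (nhds 0))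
    (hφseq : Tendsto (fun n => φ (tseq n)) atTop (nhds φbar)) :
    ∃ T ≥ (0:ℝ),
      (∀ t ≥ T, ‖j (V t) - j Vbar‖ ≤ (K * θ)⁻¹ * (φ t - φbar) ^ θ) ∧
      Tendsto (fun t => j (V t)) atTop (nhds (j Vbar)) := by
  obtain ⟨hθ, -⟩ := hθ
  set Λ : ℝ → ℝ := fun t => (K * θ)⁻¹ * (φ t - φbar) ^ θ
  have hgap (t : ℝ) (ht : 0 ≤ t) : 0 < φ t - φbar := sub_pos.2 (hgt t ht)
  have hΛ_lim : Tendsto Λ atTop (𝓝 0) := by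
    have hφ := hφmono.tendsto_atTop_of_tendsto_comp (fun t ht => (hgt t ht).le) htseq hφseq
    simpa [Λ, Real.zero_rpow hθ.ne'] using
      ((hφ.sub_const φbar).rpow_const (Or.inr hθ.le)).const_mul (K * θ)⁻¹
  have hdrift (a b : ℝ) (ha : 0 < a) (hab : a ≤ b) (hball : ∀ s ∈ Ico a b, ‖V s - Vbar‖ < r) :
      ‖j (V b) - j (V a)‖ ≤ Λ a := by
    have hpos (x : ℝ) (hx : x ∈ Icc a b) : 0 < x := ha.trans_le hx.1
    calc ‖j (V b) - j (V a)‖ ≤ Λ a - Λ b := by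
          rw [← mul_sub]
          exact norm_sub_le_of_lojasiewicz hK hθ hab (fun x hx => hjV x (hpos x hx))
            (fun x hx => (hφ' x (hpos x hx)).sub_const φbar) (fun x hx => hgap x (hpos x hx).le)
            (fun x hx => hineq x (hpos x (Ico_subset_Icc_self hx)) (hball x hx))
      _ ≤ Λ a := sub_le_self _ (by have := hgap b (ha.le.trans hab); positivity)
  have hstart : Tendsto (fun t => K₁ * Λ t ^ ((1:ℝ)/2)) atTop (𝓝 0) := by
    simpa using (hΛ_lim.rpow_const (Or.inr (by norm_num : (0:ℝ) ≤ 1 / 2))).const_mul K₁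
  obtain ⟨n, hT, hVT, hΛT⟩ := ((htseq.eventually_gt_atTop 0).and
    ((hVseq.eventually_lt_const (by positivity : (0:ℝ) < r / 4)).and
      (htseq.eventually (hstart.eventually_lt_const (by positivity : (0:ℝ) < r / 4))))).exists
  set T := tseq n
  have htrap : ∀ t ≥ T, ‖V t - Vbar‖ ≤ r / 2 :=
    forall_ge_norm_sub_le_of_displacement_le (hVcont.mono (Ici_subset_Ici.2 hT.le))
      (by linarith) fun t ht hprev =>
        calc ‖V t - V T‖ ≤ K₁ * ‖j (V t) - j (V T)‖ ^ ((1:ℝ)/2) :=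
              hinterp T hT.le t (hT.le.trans ht)
          _ ≤ K₁ * Λ T ^ ((1:ℝ)/2) := by
              gcongr; exact hdrift T t hT ht fun s hs => (hprev s hs).trans_lt (by linarith)
  have hbound (t : ℝ) (ht : T ≤ t) : ‖j (V t) - j Vbar‖ ≤ Λ t := by
    have hjV_lim : Tendsto (fun m => j (V (tseq m))) atTop (𝓝 (j Vbar)) :=
      (j.continuous.tendsto Vbar).comp (tendsto_iff_norm_sub_tendsto_zero.2 hVseq)
    refine le_of_tendsto ((tendsto_const_nhds.sub hjV_lim).norm.congr fun m => norm_sub_rev _ _)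
      ?_
    filter_upwards [htseq.eventually_ge_atTop t] with m hm
    exact hdrift t (tseq m) (hT.trans_le ht) hm fun s hs =>
      (htrap s (ht.trans hs.1)).trans_lt (by linarith)
  exact ⟨T, hT.le, hbound, tendsto_iff_norm_sub_tendsto_zero.2 <| squeeze_zero'
    (Eventually.of_forall fun _ => norm_nonneg _) ((eventually_ge_atTop T).mono hbound) hΛ_lim⟩

/-- Abstract form of the main convergence theorem.  Under
the angle/gradient differential inequality near `V̄` (i), the interpolation
estimates (ii), and the existence of an ω-limit sequence (iii), there is a
time `T` after which `‖j(V(t)) - j(V̄)‖ ≤ (Kθ)⁻¹ (φ(t) - φ̄)^θ`; in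
particular `j(V(t)) → j(V̄)` as `t → ∞`. -/
theorem stmt12 {X W : Type*} [NormedAddCommGroup X] [NormedSpace ℝ X]
    [NormedAddCommGroup W] [NormedSpace ℝ W]
    (j : X →L[ℝ] W) (V : ℝ → X) (jV' : ℝ → W) (φ φ' : ℝ → ℝ)
    (Vbar : X) (φbar θ K K₁ r : ℝ)
    (hVcont : ContinuousOn V (Set.Ici 0))
    (hjV : ∀ t > (0:ℝ), HasDerivAt (fun s => j (V s)) (jV' t) t)
    (hφcont : ContinuousOn φ (Set.Ici 0))
    (hφmono : AntitoneOn φ (Set.Ici 0))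
    (hφ' : ∀ t > (0:ℝ), HasDerivAt φ (φ' t) t)
    (hgt : ∀ t ≥ (0:ℝ), φbar < φ t)
    (hθ : θ ∈ Set.Ioc (0:ℝ) (1/2)) (hK : 0 < K) (hK₁ : 0 < K₁) (hr : 0 < r)
    -- (i) angle condition + gradient inequality near Vbar
    (hineq : ∀ t > (0:ℝ), ‖V t - Vbar‖ < r →
        K * (φ t - φbar) ^ (1 - θ) * ‖jV' t‖ ≤ -φ' t)
    -- (ii) interpolation estimates
    (hinterp : ∀ s ≥ (0:ℝ), ∀ t ≥ (0:ℝ),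
        ‖V t - V s‖ ≤ K₁ * ‖j (V t) - j (V s)‖ ^ ((1:ℝ)/2))
    (hinterp' : ∀ t ≥ (0:ℝ), ‖V t - Vbar‖ ≤ K₁ * ‖j (V t) - j Vbar‖ ^ ((1:ℝ)/2))
    -- (iii) an ω-limit sequence
    (tseq : ℕ → ℝ) (htseq0 : ∀ n, 0 ≤ tseq n)
    (htseq : Tendsto tseq atTop atTop)
    (hVseq : Tendsto (fun n => ‖V (tseq n) - Vbar‖) atTop (nhds 0))
    (hφseq : Tendsto (fun n => φ (tseq n)) atTop (nhds φbar)) :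
    ∃ T ≥ (0:ℝ),
      (∀ t ≥ T, ‖j (V t) - j Vbar‖ ≤ (K * θ)⁻¹ * (φ t - φbar) ^ θ) ∧
      Tendsto (fun t => j (V t)) atTop (nhds (j Vbar)) :=
  stmt12_general j V jV' φ φ' Vbar φbar θ K K₁ r hVcont hjV hφmono hφ' hgt hθ hK hK₁ hr hineq
    hinterp tseq htseq hVseq hφseq
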